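/- arXiv:1903.03355 — 3 statements merged into one kernel-verified Lean document; each statement's English description precedes it below -/
import Mathlib

section
/- For the pressure law P(ρ) = k²ρ^γ with k > 0 and γ > 1, the integral ∫₀^ρ √(P'(σ))/(σ + P(σ)/c²) dσ equals (2c√γ/(γ−1))·Arctan(k·ρ^{(γ−1)/2}/c) for all ρ ≥ 0. -/
open Real intervalIntegral Set

/-!
With `e = (γ - 1)/2`, the substitution `u = k σ^e / c` turns the integrand into a multiple of
`du / (1 + u²)`: indeed `σ^γ = σ · (σ^e)²`, so `k√γ σ^e / (σ + k²σ^γ/c²) = k√γ σ^(e-1) / (1 + u²)`.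
Hence `σ ↦ (2c√γ/(γ-1)) arctan (k σ^e / c)` is an antiderivative on `(0, ∞)`; it is continuous
on `[0, ∞)` and vanishes at `0`. The integrand is nonnegative, so its integrability near the
singular endpoint `0` comes for free.
-/

theorem intervalIntegral.integral_eq_sub_of_hasDerivAt_of_nonneg {f f' : ℝ → ℝ} {a b : ℝ}
    (hab : a ≤ b) (hcont : ContinuousOn f (Icc a b))
    (hderiv : ∀ x ∈ Ioo a b, HasDerivAt f (f' x) x) (hpos : ∀ x ∈ Ioo a b, 0 ≤ f' x) :
    ∫ y in a..b, f' y = f b - f a :=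
  integral_eq_sub_of_hasDerivAt_of_le hab hcont hderiv <|
    (intervalIntegrable_iff_integrableOn_Ioc_of_le hab).2
      (integrableOn_deriv_of_nonneg hcont hderiv hpos)

theorem Real.rpow_eq_mul_rpow_half_sub_one_sq {x : ℝ} (hx : 0 < x) (γ : ℝ) :
    x ^ γ = x * (x ^ ((γ - 1) / 2)) ^ 2 := by
  rw [← rpow_natCast, ← rpow_mul hx.le, mul_comm x, ← rpow_add_one hx.ne']
  congr 1
  push_cast
  ring

theorem hasDerivAt_arctan_pressure_antideriv {c k γ σ : ℝ} (hc : c ≠ 0) (hγ : γ ≠ 1)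
    (hσ : 0 < σ) :
    HasDerivAt (fun x => 2 * c * √γ / (γ - 1) * arctan (k * x ^ ((γ - 1) / 2) / c))
      (k * √γ * σ ^ ((γ - 1) / 2) / (σ + k ^ 2 * σ ^ γ / c ^ 2)) σ := by
  refine ((((hasDerivAt_rpow_const (p := (γ - 1) / 2) (Or.inl hσ.ne')).const_mul k).div_const
    c).arctan.const_mul (2 * c * √γ / (γ - 1))).congr_deriv ?_
  rw [rpow_eq_mul_rpow_half_sub_one_sq hσ γ, rpow_sub hσ, rpow_one]
  have : γ - 1 ≠ 0 := sub_ne_zero.2 hγ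
  field_simp

/-- For `P(ρ) = k²ρ^γ` with `k > 0`, `γ > 1`:
`∫₀^ρ √(P'(σ))/(σ + P(σ)/c²) dσ = (2c√γ/(γ−1))·arctan(k·ρ^{(γ−1)/2}/c)` for all `ρ ≥ 0`. -/
theorem stmt1 (c k γ : ℝ) (hc : 0 < c) (hk : 0 < k) (hγ : 1 < γ) :
    ∀ ρ : ℝ, 0 ≤ ρ →
      (∫ σ in (0:ℝ)..ρ, (k * Real.sqrt γ * σ ^ ((γ - 1) / 2)) / (σ + k ^ 2 * σ ^ γ / c ^ 2))
        = (2 * c * Real.sqrt γ / (γ - 1)) * Real.arctan (k * ρ ^ ((γ - 1) / 2) / c) := by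
  intro ρ hρ
  have he : 0 < (γ - 1) / 2 := by linarith
  have hcont : ContinuousOn
      (fun x => 2 * c * √γ / (γ - 1) * arctan (k * x ^ ((γ - 1) / 2) / c)) (Icc 0 ρ) := by
    have := continuous_rpow_const he.le
    fun_prop
  rw [integral_eq_sub_of_hasDerivAt_of_nonneg hρ hcont
    (fun x hx => hasDerivAt_arctan_pressure_antideriv hc.ne' hγ.ne' hx.1)
    (fun x ⟨hx, _⟩ => by positivity)]
  simp [zero_rpow he.ne']
end

section
/- If 0 < w − z ≤ w_max − z_min < (4c√γ/(γ−1))·Arctan(1/√γ), γ > 1, and ρ ≥ 0 satisfies w − z = (4c√γ/(γ−1))·Arctan(kρ^{(γ−1)/2}/c), then √(P'(ρ)) = k√γ·ρ^{(γ−1)/2} < c, and equivalently ρ < c^{2/(γ−1)}·k^{−2/(γ−1)}·γ^{−1/(γ−1)}. -/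
/-!
Since `arctan` is strictly increasing and the prefactor `4c√γ/(γ-1)` is positive, the bound on
`w - z` forces `kρ^{(γ-1)/2}/c < 1/√γ`, which is the subsonic inequality; raising it to the
power `2/(γ-1)` solves it for `ρ`.
-/

open Real

lemma lt_of_mul_arctan_lt_mul_arctan {A x y : ℝ} (hA : 0 < A)
    (h : A * arctan x < A * arctan y) : x < y :=
  arctan_strictMono.lt_iff_lt.mp ((mul_lt_mul_iff_right₀ hA).mp h)

lemma mul_sqrt_mul_lt_iff {k s c γ : ℝ} (hc : 0 < c) (hγ : 0 < γ) :
    k * √γ * s < c ↔ k * s / c < 1 / √γ := by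
  rw [div_lt_div_iff₀ hc (sqrt_pos.mpr hγ), one_mul, mul_right_comm]

lemma div_mul_sqrt_rpow {c k γ : ℝ} (hc : 0 ≤ c) (hk : 0 ≤ k) (hγ : 0 ≤ γ) (p : ℝ) :
    (c / (k * √γ)) ^ p = c ^ p * k ^ (-p) * γ ^ (-(p / 2)) := by
  rw [div_rpow hc (by positivity), mul_rpow hk (sqrt_nonneg γ), sqrt_eq_rpow, ← rpow_mul hγ,
    rpow_neg hk, rpow_neg hγ, one_div_mul_eq_div, div_eq_mul_inv, mul_inv, mul_assoc]

theorem stmt3_general (c k γ ρ w z wmax zmin : ℝ) (hc : 0 < c) (hk : 0 < k) (hγ : 1 < γ)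
    (hρ : 0 ≤ ρ)
    (h2 : w - z ≤ wmax - zmin)
    (h3 : wmax - zmin < (4 * c * Real.sqrt γ / (γ - 1)) * Real.arctan (1 / Real.sqrt γ))
    (hwz : w - z = (4 * c * Real.sqrt γ / (γ - 1)) * Real.arctan (k * ρ ^ ((γ - 1) / 2) / c)) :
    k * Real.sqrt γ * ρ ^ ((γ - 1) / 2) < c ∧
      ρ < c ^ (2 / (γ - 1)) * k ^ (-(2 / (γ - 1))) * γ ^ (-(1 / (γ - 1))) := by
  have hγ0 : 0 < γ := by linarith
  have hA : 0 < 4 * c * √γ / (γ - 1) := by positivity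
  have hsubsonic : k * √γ * ρ ^ ((γ - 1) / 2) < c :=
    (mul_sqrt_mul_lt_iff hc hγ0).mpr (lt_of_mul_arctan_lt_mul_arctan hA (hwz ▸ h2.trans_lt h3))
  refine ⟨hsubsonic, ?_⟩
  have hpow : ρ ^ ((γ - 1) / 2) < c / (k * √γ) := by
    rw [lt_div_iff₀ (by positivity)]
    linarith
  calc ρ < (c / (k * √γ)) ^ ((γ - 1) / 2)⁻¹ :=
        (lt_rpow_inv_iff_of_pos hρ (by positivity) (by positivity)).mpr hpow
    _ = c ^ (2 / (γ - 1)) * k ^ (-(2 / (γ - 1))) * γ ^ (-(1 / (γ - 1))) := by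
      rw [inv_div, div_mul_sqrt_rpow hc.le hk.le hγ0.le, div_right_comm, div_self two_ne_zero]

/-- If `0 < w − z ≤ w_max − z_min < (4c√γ/(γ−1))·arctan(1/√γ)` and
`w − z = (4c√γ/(γ−1))·arctan(kρ^{(γ−1)/2}/c)`, then `√(P'(ρ)) = k√γ ρ^{(γ−1)/2} < c`
and `ρ < c^{2/(γ−1)} k^{−2/(γ−1)} γ^{−1/(γ−1)}`. -/
theorem stmt3 (c k γ ρ w z wmax zmin : ℝ) (hc : 0 < c) (hk : 0 < k) (hγ : 1 < γ)
    (hρ : 0 ≤ ρ)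
    (h1 : 0 < w - z) (h2 : w - z ≤ wmax - zmin)
    (h3 : wmax - zmin < (4 * c * Real.sqrt γ / (γ - 1)) * Real.arctan (1 / Real.sqrt γ))
    (hwz : w - z = (4 * c * Real.sqrt γ / (γ - 1)) * Real.arctan (k * ρ ^ ((γ - 1) / 2) / c)) :
    k * Real.sqrt γ * ρ ^ ((γ - 1) / 2) < c ∧
      ρ < c ^ (2 / (γ - 1)) * k ^ (-(2 / (γ - 1))) * γ ^ (-(1 / (γ - 1))) :=
  stmt3_general c k γ ρ w z wmax zmin hc hk hγ hρ h2 h3 hwz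
end

section
/- Suppose y : [0, T) → ℝ is C¹, y(0) > 0, and y'(t) ≥ −C·y(t)^{(γ+1)/(2γ−2)}·(1+y(t)²)^{3/2} for all t, where C > 0 and 1 < γ < 3. Define 𝒴(t) = y(t)^{(3−γ)/(2γ−2)}·(1+y(t)²)^{1/2}. If additionally y(t) ≤ γ^{−1/2} for all t, then there exists a constant C' > 0 depending only on C and γ such that 𝒴'(t) ≥ −C'·𝒴(t)² for all t. -/
open Real Set

/-- If `y` is C¹ on `[0,T)` with `y(0) > 0`, `0 < y(t) ≤ γ^{−1/2}`, and
`y' ≥ −C y^{(γ+1)/(2γ−2)} (1+y²)^{3/2}`, then `𝒴 = y^{(3−γ)/(2γ−2)} √(1+y²)`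
satisfies `𝒴' ≥ −C' 𝒴²` for some `C' > 0` depending only on `C` and `γ`. -/
theorem stmt5 :
    ∀ C γ : ℝ, 0 < C → 1 < γ → γ < 3 →
    ∃ C' : ℝ, 0 < C' ∧
      ∀ (T : ℝ) (y y' : ℝ → ℝ), 0 < T →
        (∀ t ∈ Ico (0:ℝ) T, HasDerivAt y (y' t) t) →
        0 < y 0 →
        (∀ t ∈ Ico (0:ℝ) T, 0 < y t ∧ y t ≤ γ ^ (-(1:ℝ)/2)) →
        (∀ t ∈ Ico (0:ℝ) T,
          y' t ≥ -C * y t ^ ((γ + 1) / (2 * γ - 2)) * (1 + y t ^ 2) ^ ((3:ℝ)/2)) →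
        ∀ t ∈ Ico (0:ℝ) T,
          deriv (fun s => y s ^ ((3 - γ) / (2 * γ - 2)) * Real.sqrt (1 + y s ^ 2)) t
            ≥ -C' * (y t ^ ((3 - γ) / (2 * γ - 2)) * Real.sqrt (1 + y t ^ 2)) ^ 2 := by
  intro C γ hC hγ1 hγ3
  have hden : (0:ℝ) < 2 * γ - 2 := by linarith
  set p : ℝ := (3 - γ) / (2 * γ - 2) with hp_def
  have hp : 0 < p := div_pos (by linarith) hden
  refine ⟨C * (2 * p + 1), by positivity, ?_⟩
  intro T y y' hT hderiv h0 hbd hineq t ht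
  obtain ⟨hy0, hyle⟩ := hbd t ht
  set u := y t with hu_def
  -- u ≤ 1
  have hγle1 : γ ^ (-(1:ℝ)/2) ≤ 1 :=
    Real.rpow_le_one_of_one_le_of_nonpos (by linarith) (by norm_num)
  have hu1 : u ≤ 1 := hyle.trans hγle1
  have hu2 : u ^ 2 ≤ 1 := by nlinarith
  set s := Real.sqrt (1 + u ^ 2) with hs_def
  have hs0 : (0:ℝ) < 1 + u ^ 2 := by positivity
  have hs : 0 < s := Real.sqrt_pos.2 hs0
  have hs2 : s ^ 2 = 1 + u ^ 2 := Real.sq_sqrt hs0.le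
  -- derivative computation
  have hdy := hderiv t ht
  have h1 : HasDerivAt (fun r => y r ^ p) (p * u ^ (p - 1) * y' t) t := by
    have := hdy.rpow_const (Or.inl hy0.ne') (p := p)
    convert this using 1
    ring
  have hinner : HasDerivAt (fun r => 1 + y r ^ 2) (2 * u * y' t) t := by
    have := ((hdy.pow 2).const_add 1)
    simpa [mul_comm, mul_assoc, mul_left_comm] using this
  have h2 : HasDerivAt (fun r => Real.sqrt (1 + y r ^ 2)) (2 * u * y' t / (2 * s)) t :=
    hinner.sqrt (by positivity)
  have hD : HasDerivAt (fun r => y r ^ p * Real.sqrt (1 + y r ^ 2))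
      ((p * u ^ (p - 1) * y' t) * s + u ^ p * (2 * u * y' t / (2 * s))) t := h1.mul h2
  rw [hD.deriv]
  -- abbreviations for rpow terms
  set E := u ^ (p - 1) with hE_def
  have hEpos : 0 < E := Real.rpow_pos_of_pos hy0 _
  have hA : u ^ p = E * u := by
    rw [hE_def, ← Real.rpow_add_one hy0.ne']
    norm_num
  have hQ : u ^ ((γ + 1) / (2 * γ - 2)) = E * u ^ 2 := by
    have hq : (γ + 1) / (2 * γ - 2) = (p - 1) + 2 := by
      rw [hp_def, div_sub_one hden.ne', div_add' _ _ _ hden.ne']; congr 1; ring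
    rw [hq, Real.rpow_add hy0, hE_def, show (2:ℝ) = ((2:ℕ):ℝ) by norm_num,
      Real.rpow_natCast]
  have h32 : (1 + u ^ 2) ^ ((3:ℝ)/2) = s ^ 3 := by
    rw [hs_def, show ((3:ℝ)/2) = (1/2) * (3:ℕ) by norm_num, Real.rpow_mul hs0.le,
      Real.rpow_natCast, ← Real.sqrt_eq_rpow]
  -- rewrite derivative as y' t * M
  have hMexpr : (p * E * y' t) * s + (E * u) * (2 * u * y' t / (2 * s))
      = y' t * (p * E * s + E * u ^ 2 / s) := by
    field_simp
  have hMpos : 0 ≤ p * E * s + E * u ^ 2 / s := by positivity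
  have hlow := hineq t ht
  -- key bound
  have key : (-C * (E * u ^ 2) * s ^ 3) * (p * E * s + E * u ^ 2 / s)
      ≥ -(C * (2 * p + 1)) * ((E * u) * s) ^ 2 := by
    have hstep : p * s ^ 2 + u ^ 2 ≤ 2 * p + 1 := by rw [hs2]; nlinarith
    have lhs_eq : (-C * (E * u ^ 2) * s ^ 3) * (p * E * s + E * u ^ 2 / s)
        = -((C * E ^ 2 * u ^ 2 * s ^ 2) * (p * s ^ 2 + u ^ 2)) := by
      field_simp
    have rhs_eq : -(C * (2 * p + 1)) * ((E * u) * s) ^ 2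
        = -((C * E ^ 2 * u ^ 2 * s ^ 2) * (2 * p + 1)) := by ring
    rw [lhs_eq, rhs_eq]
    exact neg_le_neg (mul_le_mul_of_nonneg_left hstep (by positivity))
  calc (p * u ^ (p - 1) * y' t) * s + u ^ p * (2 * u * y' t / (2 * s))
      = y' t * (p * E * s + E * u ^ 2 / s) := by rw [hA, hE_def] at *; exact hMexpr
    _ ≥ (-C * u ^ ((γ + 1) / (2 * γ - 2)) * (1 + u ^ 2) ^ ((3:ℝ)/2))
          * (p * E * s + E * u ^ 2 / s) := mul_le_mul_of_nonneg_right hlow hMpos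
    _ = (-C * (E * u ^ 2) * s ^ 3) * (p * E * s + E * u ^ 2 / s) := by rw [hQ, h32]
    _ ≥ -(C * (2 * p + 1)) * ((E * u) * s) ^ 2 := key
    _ = -(C * (2 * p + 1)) * (u ^ p * s) ^ 2 := by rw [hA]
end
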